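/- For a rank-one operator |x⟩⟨y| ∈ M_m ⊗ M_n, the S(k)-operator norm factorizes as ‖ |x⟩⟨y| ‖_{S(k)} = ‖x‖_{s(k)} · ‖y‖_{s(k)}. In particular, for the maximally entangled state ψ_+ = (1/√n) Σ_i |i⟩⊗|i⟩ in C^n ⊗ C^n, one has ‖ |ψ_+⟩⟨ψ_+| ‖_{S(k)} = k/n. -/

import Mathlib

open scoped BigOperators

noncomputable section

/-- Elementary tensor of two vectors. -/
def tens {m n : ℕ} (a : Fin m → ℂ) (b : Fin n → ℂ) : Fin m × Fin n → ℂ :=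
  fun p => a p.1 * b p.2

/-- Inner product `⟨w|v⟩`, conjugate-linear in the first argument. -/
def ip {ι : Type} [Fintype ι] (w v : ι → ℂ) : ℂ :=
  ∑ i, (starRingEnd ℂ) (w i) * v i

/-- Euclidean norm. -/
def nrm {ι : Type} [Fintype ι] (v : ι → ℂ) : ℝ :=
  Real.sqrt (∑ i, Complex.normSq (v i))

/-- Schmidt rank at most `k`: `v` is a sum of `k` elementary tensors. -/
def SRle {m n : ℕ} (k : ℕ) (v : Fin m × Fin n → ℂ) : Prop :=
  ∃ (a : Fin k → Fin m → ℂ) (b : Fin k → Fin n → ℂ),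
    v = fun p => ∑ l, a l p.1 * b l p.2

/-- The `s(k)`-vector norm. -/
def snorm {m n : ℕ} (k : ℕ) (v : Fin m × Fin n → ℂ) : ℝ :=
  sSup { r : ℝ | ∃ w : Fin m × Fin n → ℂ, nrm w = 1 ∧ SRle k w ∧ r = ‖ip w v‖ }

/-- The `S(k)`-operator norm. -/
def Snorm {m n : ℕ} (k : ℕ) (X : Matrix (Fin m × Fin n) (Fin m × Fin n) ℂ) : ℝ :=
  sSup { r : ℝ | ∃ v w : Fin m × Fin n → ℂ, nrm v = 1 ∧ nrm w = 1 ∧ SRle k v ∧ SRle k w ∧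
    r = ‖ip w (X.mulVec v)‖ }

/-- `k`-block positivity: `⟨v|X|v⟩ ≥ 0` for all unit vectors of Schmidt rank at most `k`. -/
def kBlockPos {m n : ℕ} (k : ℕ) (X : Matrix (Fin m × Fin n) (Fin m × Fin n) ℂ) : Prop :=
  ∀ v : Fin m × Fin n → ℂ, nrm v = 1 → SRle k v → 0 ≤ (ip v (X.mulVec v)).re

/-- The maximally entangled state `ψ_+ = (1/√n) Σ_i |i⟩⊗|i⟩ ∈ ℂ^n ⊗ ℂ^n`. -/
def maxEnt (n : ℕ) : Fin n × Fin n → ℂ :=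
  fun p => if p.1 = p.2 then ((1 / Real.sqrt n : ℝ) : ℂ) else 0

/-! Since `⟨w|x⟩⟨y|v⟩` factorizes, the supremum defining the `S(k)`-norm of `|x⟩⟨y|` runs over a
product of two sets of nonnegative reals, and so splits into the product of the two `s(k)`-norms.

For `ψ_+` one has `⟨w|ψ_+⟩ = conj (tr w) / √n`, reading `w` as an `n × n` matrix. If `w` has
Schmidt rank at most `k`, its columns `c_j` lie in a subspace `V` of dimension at most `k`; with `P`
the orthogonal projection onto `V`,
`|tr w| = |∑ ⟨e_j, c_j⟩| = |∑ ⟨P e_j, c_j⟩| ≤ (∑ ‖P e_j‖²)^{1/2} ‖w‖ ≤ √k ‖w‖`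
by Cauchy–Schwarz and Bessel's inequality. The state `k^{-1/2} ∑_{i<k} |i⟩⊗|i⟩` attains the bound,
so `‖ψ_+‖_{s(k)} = √(k/n)`. -/

open Module
open scoped InnerProductSpace ComplexConjugate Pointwise Matrix

section Projection

variable {𝕜 E ι : Type*} [RCLike 𝕜] [NormedAddCommGroup E] [InnerProductSpace 𝕜 E] [Fintype ι]

theorem Orthonormal.sum_norm_sq_starProjection_le_finrank {e : ι → E} (he : Orthonormal 𝕜 e)
    (V : Submodule 𝕜 E) [FiniteDimensional 𝕜 V] :
    ∑ i, ‖V.starProjection (e i)‖ ^ 2 ≤ finrank 𝕜 V := by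
  let u := stdOrthonormalBasis 𝕜 V
  have parseval (x : E) : ‖V.starProjection x‖ ^ 2 = ∑ s, ‖⟪x, (u s : E)⟫_𝕜‖ ^ 2 := by
    rw [V.starProjection_apply, ← Submodule.coe_norm, ← u.sum_sq_norm_inner_left]
    simp_rw [Submodule.inner_orthogonalProjectionOnto_eq_of_mem_right]
  calc ∑ i, ‖V.starProjection (e i)‖ ^ 2 = ∑ s, ∑ i, ‖⟪e i, (u s : E)⟫_𝕜‖ ^ 2 := by
        simp_rw [parseval]; exact Finset.sum_comm
    _ ≤ ∑ s, ‖(u s : E)‖ ^ 2 := Finset.sum_le_sum fun s _ => he.sum_inner_products_le _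
    _ = finrank 𝕜 V := by simp [← Submodule.coe_norm, u.orthonormal.1]

theorem Orthonormal.norm_sum_inner_le_of_forall_mem {e : ι → E} (he : Orthonormal 𝕜 e)
    (V : Submodule 𝕜 E) [FiniteDimensional 𝕜 V] {c : ι → E} (hc : ∀ i, c i ∈ V) :
    ‖∑ i, ⟪e i, c i⟫_𝕜‖ ≤ √(finrank 𝕜 V) * √(∑ i, ‖c i‖ ^ 2) := by
  have hproj (i : ι) : ⟪e i, c i⟫_𝕜 = ⟪V.starProjection (e i), c i⟫_𝕜 := by
    rw [V.inner_starProjection_left_eq_right, V.starProjection_eq_self_iff.2 (hc i)]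
  calc ‖∑ i, ⟪e i, c i⟫_𝕜‖ ≤ ∑ i, ‖V.starProjection (e i)‖ * ‖c i‖ := by
        simp_rw [hproj]
        exact (norm_sum_le _ _).trans (Finset.sum_le_sum fun i _ => norm_inner_le_norm _ _)
    _ ≤ √(∑ i, ‖V.starProjection (e i)‖ ^ 2) * √(∑ i, ‖c i‖ ^ 2) :=
        Real.sum_mul_le_sqrt_mul_sqrt _ _ _
    _ ≤ √(finrank 𝕜 V) * √(∑ i, ‖c i‖ ^ 2) := by
        gcongr; exact he.sum_norm_sq_starProjection_le_finrank V

end Projection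

theorem Real.sSup_mul_of_nonneg {s t : Set ℝ} (hs₀ : ∀ x ∈ s, 0 ≤ x) (ht₀ : ∀ y ∈ t, 0 ≤ y)
    (hs : BddAbove s) (ht : BddAbove t) : sSup (s * t) = sSup s * sSup t := by
  have hst : ∀ z ∈ s * t, z ≤ sSup s * sSup t := by
    rintro _ ⟨x, hx, y, hy, rfl⟩
    exact mul_le_mul (le_csSup hs hx) (le_csSup ht hy) (ht₀ y hy) (Real.sSup_nonneg hs₀)
  have hst₀ : 0 ≤ sSup (s * t) := Real.sSup_nonneg <| by
    rintro _ ⟨x, hx, y, hy, rfl⟩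
    exact mul_nonneg (hs₀ x hx) (ht₀ y hy)
  refine le_antisymm (Real.sSup_le hst (mul_nonneg (Real.sSup_nonneg hs₀) (Real.sSup_nonneg ht₀)))
    ?_
  rw [mul_comm, ← smul_eq_mul, ← Real.sSup_smul_of_nonneg (Real.sSup_nonneg ht₀)]
  refine Real.sSup_le ?_ hst₀
  rintro _ ⟨x, hx, rfl⟩
  dsimp only
  rw [smul_eq_mul, mul_comm, ← smul_eq_mul, ← Real.sSup_smul_of_nonneg (hs₀ x hx)]
  refine Real.sSup_le ?_ hst₀
  rintro _ ⟨y, hy, rfl⟩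
  exact le_csSup ⟨_, hst⟩ (Set.mul_mem_mul hx hy)

theorem Fin.sum_ite_val_lt {M : Type*} [AddCommMonoid M] {n k : ℕ} (hkn : k ≤ n) (c : M) :
    ∑ i : Fin n, (if (i : ℕ) < k then c else 0) = k • c := by
  simp [Finset.sum_ite, Fin.card_filter_val_lt, hkn]

section InnerProduct

variable {ι : Type} [Fintype ι]

theorem ip_eq_inner (w v : ι → ℂ) : ip w v = ⟪WithLp.toLp 2 w, WithLp.toLp 2 v⟫_ℂ := by
  simp [ip, PiLp.inner_apply, mul_comm]

theorem nrm_nonneg (v : ι → ℂ) : 0 ≤ nrm v := Real.sqrt_nonneg _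

theorem nrm_sq (v : ι → ℂ) : nrm v ^ 2 = ∑ i, Complex.normSq (v i) :=
  Real.sq_sqrt (Finset.sum_nonneg fun i _ => Complex.normSq_nonneg (v i))

theorem nrm_eq_norm (v : ι → ℂ) : nrm v = ‖WithLp.toLp 2 v‖ := by
  simp [nrm, EuclideanSpace.norm_eq, Complex.normSq_eq_norm_sq]

theorem norm_ip_le (w v : ι → ℂ) : ‖ip w v‖ ≤ nrm w * nrm v := by
  rw [ip_eq_inner, nrm_eq_norm, nrm_eq_norm]
  exact norm_inner_le_norm _ _

theorem norm_ip_comm (w v : ι → ℂ) : ‖ip w v‖ = ‖ip v w‖ := by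
  rw [ip_eq_inner, ip_eq_inner, norm_inner_symm]

theorem ip_vecMulVec_mulVec (x y v w : ι → ℂ) :
    ip w (Matrix.vecMulVec x (star y) *ᵥ v) = ip w x * ip y v := by
  rw [Matrix.vecMulVec_mulVec]
  simp [ip, dotProduct, Finset.sum_mul, mul_assoc]

end InnerProduct

section SchmidtRank

variable {m n : ℕ}

theorem bddAbove_snorm_set (k : ℕ) (v : Fin m × Fin n → ℂ) :
    BddAbove { r : ℝ | ∃ w : Fin m × Fin n → ℂ, nrm w = 1 ∧ SRle k w ∧ r = ‖ip w v‖ } :=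
  ⟨nrm v, by rintro _ ⟨w, hw, -, rfl⟩; simpa [hw] using norm_ip_le w v⟩

theorem Snorm_vecMulVec (k : ℕ) (x y : Fin m × Fin n → ℂ) :
    Snorm k (Matrix.vecMulVec x (star y)) = snorm k x * snorm k y := by
  have hset : { r : ℝ | ∃ v w : Fin m × Fin n → ℂ, nrm v = 1 ∧ nrm w = 1 ∧ SRle k v ∧ SRle k w ∧
      r = ‖ip w (Matrix.vecMulVec x (star y) *ᵥ v)‖ } =
      { r : ℝ | ∃ w : Fin m × Fin n → ℂ, nrm w = 1 ∧ SRle k w ∧ r = ‖ip w x‖ } *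
      { r : ℝ | ∃ w : Fin m × Fin n → ℂ, nrm w = 1 ∧ SRle k w ∧ r = ‖ip w y‖ } := by
    ext r
    simp only [ip_vecMulVec_mulVec, norm_mul, Set.mem_mul, Set.mem_ofPred_eq]
    constructor
    · rintro ⟨v, w, hv, hw, hvk, hwk, rfl⟩
      exact ⟨_, ⟨w, hw, hwk, rfl⟩, _, ⟨v, hv, hvk, rfl⟩, by rw [norm_ip_comm v]⟩
    · rintro ⟨_, ⟨w, hw, hwk, rfl⟩, _, ⟨v, hv, hvk, rfl⟩, rfl⟩
      exact ⟨v, w, hv, hw, hvk, hwk, by rw [norm_ip_comm v]⟩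
  rw [Snorm, hset]
  exact Real.sSup_mul_of_nonneg (by rintro _ ⟨w, -, -, rfl⟩; positivity)
    (by rintro _ ⟨w, -, -, rfl⟩; positivity) (bddAbove_snorm_set k x) (bddAbove_snorm_set k y)

theorem norm_sum_diag_le_of_SRle {k : ℕ} {w : Fin n × Fin n → ℂ} (hw : SRle k w) :
    ‖∑ i, w (i, i)‖ ≤ √k * nrm w := by
  obtain ⟨a, b, rfl⟩ := hw
  let V := Submodule.span ℂ (Set.range fun l => WithLp.toLp 2 (a l))
  let c (j : Fin n) : EuclideanSpace ℂ (Fin n) := WithLp.toLp 2 fun i => ∑ l, a l i * b l j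
  have hc (j : Fin n) : c j ∈ V := by
    have : c j = ∑ l, b l j • WithLp.toLp 2 (a l) := by ext i; simp [c, mul_comm]
    rw [this]
    exact Submodule.sum_mem _ fun l _ => Submodule.smul_mem _ _ (Submodule.subset_span ⟨l, rfl⟩)
  have htrace : ∑ i, ∑ l, a l i * b l i = ∑ i, ⟪EuclideanSpace.single i (1 : ℂ), c i⟫_ℂ := by
    simp [c, EuclideanSpace.inner_single_left]
  have hnorm : ∑ j, ‖c j‖ ^ 2 = nrm (fun p : Fin n × Fin n => ∑ l, a l p.1 * b l p.2) ^ 2 := by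
    rw [nrm_sq, Fintype.sum_prod_type_right]
    simp [c, EuclideanSpace.norm_sq_eq, Complex.normSq_eq_norm_sq]
  calc ‖∑ i, ∑ l, a l i * b l i‖
      ≤ √(finrank ℂ V) * √(∑ j, ‖c j‖ ^ 2) := by
        rw [htrace]; exact EuclideanSpace.orthonormal_single.norm_sum_inner_le_of_forall_mem V hc
    _ ≤ √k * nrm (fun p : Fin n × Fin n => ∑ l, a l p.1 * b l p.2) := by
        have hV : finrank ℂ V ≤ k :=
          (finrank_range_le_card (R := ℂ) fun l => WithLp.toLp 2 (a l)).trans_eq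
            (Fintype.card_fin k)
        rw [hnorm, Real.sqrt_sq (nrm_nonneg _)]
        gcongr
        exact nrm_nonneg _

end SchmidtRank

section MaxEnt

variable {n : ℕ}

theorem norm_ip_maxEnt (w : Fin n × Fin n → ℂ) : ‖ip w (maxEnt n)‖ = ‖∑ i, w (i, i)‖ / √n := by
  have : ip w (maxEnt n) = conj (∑ i, w (i, i)) * ((1 / √n : ℝ) : ℂ) := by
    simp [ip, maxEnt, Fintype.sum_prod_type, mul_ite, Finset.sum_mul]
  rw [this, norm_mul, Complex.norm_conj, Complex.norm_of_nonneg (by positivity), mul_one_div]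

def partialMaxEnt (n k : ℕ) : Fin n × Fin n → ℂ :=
  fun p => if p.1 = p.2 ∧ (p.1 : ℕ) < k then ((1 / √k : ℝ) : ℂ) else 0

theorem SRle_partialMaxEnt (k : ℕ) : SRle k (partialMaxEnt n k) := by
  refine ⟨fun l i => if (i : ℕ) = l then ((1 / √k : ℝ) : ℂ) else 0,
    fun l j => if (j : ℕ) = l then 1 else 0, ?_⟩
  ext ⟨i, j⟩
  by_cases hi : (i : ℕ) < k
  · have hl (l : Fin k) : (i : ℕ) = l ↔ l = ⟨i, hi⟩ := by rw [Fin.ext_iff, eq_comm]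
    simp only [hl, ite_mul, zero_mul, Finset.sum_ite_eq', Finset.mem_univ, if_true]
    simp [partialMaxEnt, hi, Fin.val_inj, eq_comm (a := j)]
  · have hl (l : Fin k) : (i : ℕ) ≠ l := fun h => hi (h ▸ l.isLt)
    simp [partialMaxEnt, hi, hl]

theorem nrm_partialMaxEnt {k : ℕ} (hk : k ≠ 0) (hkn : k ≤ n) : nrm (partialMaxEnt n k) = 1 := by
  have : ∑ p, Complex.normSq (partialMaxEnt n k p) = 1 := by
    simp [partialMaxEnt, apply_ite Complex.normSq, ite_and, Fintype.sum_prod_type,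
      Fin.sum_ite_val_lt hkn, hk]
  rw [nrm, this, Real.sqrt_one]

theorem sum_diag_partialMaxEnt {k : ℕ} (hkn : k ≤ n) :
    ∑ i, partialMaxEnt n k (i, i) = √k := by
  simp only [partialMaxEnt, true_and, Fin.sum_ite_val_lt hkn, nsmul_eq_mul]
  push_cast
  rw [mul_one_div]
  exact_mod_cast Real.div_sqrt

theorem snorm_maxEnt {k : ℕ} (hk : k ≠ 0) (hkn : k ≤ n) : snorm k (maxEnt n) = √k / √n := by
  apply le_antisymm
  · refine Real.sSup_le ?_ (by positivity)
    rintro _ ⟨w, hw, hwk, rfl⟩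
    rw [norm_ip_maxEnt]
    gcongr
    simpa [hw] using norm_sum_diag_le_of_SRle hwk
  · refine le_csSup (bddAbove_snorm_set k _)
      ⟨partialMaxEnt n k, nrm_partialMaxEnt hk hkn, SRle_partialMaxEnt k, ?_⟩
    rw [norm_ip_maxEnt, sum_diag_partialMaxEnt hkn, Complex.norm_of_nonneg (Real.sqrt_nonneg _)]

end MaxEnt

/-- For a rank-one operator `|x⟩⟨y| ∈ M_m ⊗ M_n`, the `S(k)`-norm factorizes
as `‖|x⟩⟨y|‖_{S(k)} = ‖x‖_{s(k)}·‖y‖_{s(k)}`.  In particular, for the maximally entangled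
state `ψ_+`, one has `‖|ψ_+⟩⟨ψ_+|‖_{S(k)} = k/n`. -/
theorem Snorm_rank_one_and_maxEnt :
    (∀ (m n k : ℕ) (x y : Fin m × Fin n → ℂ),
      Snorm k (Matrix.vecMulVec x (star y)) = snorm k x * snorm k y) ∧
    (∀ n k : ℕ, 1 ≤ k → k ≤ n →
      Snorm k (Matrix.vecMulVec (maxEnt n) (star (maxEnt n))) = (k : ℝ) / n) := by
  refine ⟨fun m n k x y => Snorm_vecMulVec k x y, fun n k hk hkn => ?_⟩
  rw [Snorm_vecMulVec, snorm_maxEnt (by omega) hkn, div_mul_div_comm,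
    Real.mul_self_sqrt (Nat.cast_nonneg k), Real.mul_self_sqrt (Nat.cast_nonneg n)]
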